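/- Validity of axioms A1 and A2: in every Kripke LCR model, for every world x and all L≻-formulas φ, ψ, θ, one has v_x(φ ≻ (ψ ∧ θ)) = min(v_x(φ ≻ ψ), v_x(φ ≻ θ)); consequently both (φ ≻ (ψ ∧ θ)) → ((φ ≻ ψ) ∧ (φ ≻ θ)) and ((φ ≻ ψ) ∧ (φ ≻ θ)) → (φ ≻ (ψ ∧ θ)) take value 1 at every world of every Kripke LCR model. -/
import Mathlib


namespace LCR

/-- Łukasiewicz negation on ℝ. -/
noncomputable def lneg (a : ℝ) : ℝ := 1 - a

/-- Łukasiewicz implication on ℝ. -/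
noncomputable def limp (a b : ℝ) : ℝ := min 1 (1 - a + b)

/-- Łukasiewicz strong conjunction ⊙ on ℝ. -/
noncomputable def lodot (a b : ℝ) : ℝ := max 0 (a + b - 1)

/-- The truth-value set T = {0, 1/(m−1), …, 1}. -/
def Tset (m : ℕ) : Set ℝ := {a | ∃ i : Fin m, a = (i : ℝ) / ((m : ℝ) - 1)}

/-- The k-th truth value k/(m−1). -/
noncomputable def tv (m : ℕ) (k : Fin m) : ℝ := (k : ℝ) / ((m : ℝ) - 1)

/-- Formulas of the language L≻. -/
inductive Formula : Type where
  | var  : ℕ → Formula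
  | neg  : Formula → Formula
  | imp  : Formula → Formula → Formula
  | cond : Formula → Formula → Formula
deriving DecidableEq

namespace Formula
/-- φ ∨ ψ := (φ → ψ) → ψ. -/
def or (φ ψ : Formula) : Formula := .imp (.imp φ ψ) ψ
/-- φ ∧ ψ := ¬(¬φ ∨ ¬ψ). -/
def and (φ ψ : Formula) : Formula := .neg (Formula.or (.neg φ) (.neg ψ))
/-- φ ↔ ψ := (φ → ψ) ∧ (ψ → φ). -/
def iff (φ ψ : Formula) : Formula := Formula.and (.imp φ ψ) (.imp ψ φ)
end Formula

/-- Purely propositional (¬,→)-formulas. -/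
inductive PForm : Type where
  | var : ℕ → PForm
  | neg : PForm → PForm
  | imp : PForm → PForm → PForm

/-- Evaluation of a propositional formula under an assignment. -/
noncomputable def PForm.eval (σ : ℕ → ℝ) : PForm → ℝ
  | .var n => σ n
  | .neg φ => lneg (PForm.eval σ φ)
  | .imp φ ψ => limp (PForm.eval σ φ) (PForm.eval σ ψ)

/-- Tautology of Łukasiewicz m-valued propositional logic. -/
def PForm.Taut (m : ℕ) (φ : PForm) : Prop :=
  ∀ σ : ℕ → ℝ, (∀ n, σ n ∈ Tset m) → PForm.eval σ φ = 1

/-- Substitution of L≻-formulas for the variables of a propositional formula. -/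
def PForm.subst (σ : ℕ → Formula) : PForm → Formula
  | .var n => σ n
  | .neg φ => .neg (PForm.subst σ φ)
  | .imp φ ψ => .imp (PForm.subst σ φ) (PForm.subst σ ψ)

/-- `J` is a family of Rosser–Turquette J-operators: each `J a` is obtained by substitution
into a (¬,→)-definable one-place connective whose value is 1 at inputs equal to `tv m a`
and 0 at all other truth values. -/
def IsJFamily (m : ℕ) (J : Fin m → Formula → Formula) : Prop :=
  ∃ P : Fin m → PForm,
    (∀ a φ, J a φ = PForm.subst (fun _ => φ) (P a)) ∧
    (∀ (a : Fin m) (σ : ℕ → ℝ), (∀ n, σ n ∈ Tset m) →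
      PForm.eval σ (P a) = if σ 0 = tv m a then 1 else 0)

/-- `I` is a family of threshold operators: each `I a` is obtained by substitution into a
(¬,→)-definable one-place connective whose value is 1 at inputs ≥ `tv m a` and 0 otherwise. -/
def IsIFamily (m : ℕ) (I : Fin m → Formula → Formula) : Prop :=
  ∃ P : Fin m → PForm,
    (∀ a φ, I a φ = PForm.subst (fun _ => φ) (P a)) ∧
    (∀ (a : Fin m) (σ : ℕ → ℝ), (∀ n, σ n ∈ Tset m) →
      PForm.eval σ (P a) = if tv m a ≤ σ 0 then 1 else 0)

/-- The index of aᵢ = (m−i)/(m−1) for i = j+1, i.e. m−1−j. -/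
def revIdx {m : ℕ} (j : Fin m) : Fin m := ⟨m - 1 - j.1, by have := j.isLt; omega⟩

/-- Index-level strong conjunction: tv (odotIdx a b) = tv a ⊙ tv b. -/
def odotIdx {m : ℕ} (a b : Fin m) : Fin m :=
  ⟨a.1 + b.1 - (m - 1), by have := a.isLt; have := b.isLt; omega⟩

/-- Nested implication →ⁿᵢ₌₁(φᵢ, ψ) = φₙ → (φₙ₋₁ → (⋯ → (φ₁ → ψ))), with φᵢ = f (i−1). -/
def nestImp : (n : ℕ) → (Fin n → Formula) → Formula → Formula
  | 0, _, ψ => ψ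
  | n+1, f, ψ => .imp (f (Fin.last n)) (nestImp n (fun i => f i.castSucc) ψ)

/-- Theorems of the system LCR (relative to the I-operators used in the rules R_a). -/
inductive Thm (m : ℕ) (I : Fin m → Formula → Formula) : Formula → Prop where
  | taut : ∀ (ψ : PForm) (σ : ℕ → Formula), PForm.Taut m ψ → Thm m I (PForm.subst σ ψ)
  | a1 : ∀ φ ψ θ : Formula,
      Thm m I (.imp (.cond φ (ψ.and θ)) ((Formula.cond φ ψ).and (.cond φ θ)))
  | a2 : ∀ φ ψ θ : Formula,
      Thm m I (.imp ((Formula.cond φ ψ).and (.cond φ θ)) (.cond φ (ψ.and θ)))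
  | a3 : ∀ (φ : Formula) (p : ℕ), Thm m I (.cond φ (.imp (.var p) (.var p)))
  | mp : ∀ φ ψ : Formula, Thm m I (.imp φ ψ) → Thm m I φ → Thm m I ψ
  | rcea : ∀ φ ψ θ : Formula,
      Thm m I (φ.iff ψ) → Thm m I ((Formula.cond φ θ).iff (.cond ψ θ))
  | rcec : ∀ φ ψ θ : Formula,
      Thm m I (φ.iff ψ) → Thm m I ((Formula.cond θ φ).iff (.cond θ ψ))
  | ra : ∀ (a : Fin m) (φ : Formula) (γ : Fin m → Formula) (δ : Formula),
      (∀ b : Fin m,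
        Thm m I (nestImp m (fun j => I (odotIdx (revIdx j) b) (γ j)) (I (odotIdx a b) δ))) →
      Thm m I (nestImp m (fun j => I (revIdx j) (.cond φ (γ j))) (I a (.cond φ δ)))

/-- Γ ⊢_LCR φ : derivability from Γ by theorems of LCR and modus ponens. -/
inductive Deriv (m : ℕ) (I : Fin m → Formula → Formula) (Γ : Set Formula) : Formula → Prop where
  | thm : ∀ φ, Thm m I φ → Deriv m I Γ φ
  | mem : ∀ φ, φ ∈ Γ → Deriv m I Γ φ
  | mp : ∀ φ ψ, Deriv m I Γ (.imp φ ψ) → Deriv m I Γ φ → Deriv m I Γ ψ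

/-- A Kripke LCR model over a set of worlds W. -/
structure Model (m : ℕ) (W : Type) : Type where
  ne : Nonempty W
  R : (Fin m → Set W) → W → W → ℝ
  R_mem : ∀ X x y, R X x y ∈ Tset m
  v : ℕ → W → ℝ
  v_mem : ∀ p x, v p x ∈ Tset m

/-- Valuation of formulas in a Kripke LCR model. -/
noncomputable def Model.val {m : ℕ} {W : Type} (M : Model m W) : Formula → W → ℝ
  | .var p, x => M.v p x
  | .neg φ, x => lneg (M.val φ x)
  | .imp φ ψ, x => limp (M.val φ x) (M.val ψ x)
  | .cond φ ψ, x =>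
      sInf (Set.range fun y : W =>
        limp (M.R (fun i => {z : W | M.val φ z = tv m i}) x y) (M.val ψ y))

/-- Semantic consequence Γ ⊨ φ over all Kripke LCR models. -/
def Entails (m : ℕ) (Γ : Set Formula) (φ : Formula) : Prop :=
  ∀ (W : Type) (M : Model m W) (x : W), (∀ ψ ∈ Γ, M.val ψ x = 1) → M.val φ x = 1

/-- Syntactic consistency. -/
def Consistent (m : ℕ) (I : Fin m → Formula → Formula) (Γ : Set Formula) : Prop :=
  ¬ ∃ φ : Formula, Deriv m I Γ φ ∧ Deriv m I Γ (.neg φ)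

/-- Maximal consistency. -/
def MaxConsistent (m : ℕ) (I : Fin m → Formula → Formula) (Γ : Set Formula) : Prop :=
  Consistent m I Γ ∧ ∀ φ : Formula, Deriv m I Γ φ → φ ∈ Γ


lemma tset_bounds {m : ℕ} (hm : 2 ≤ m) {a : ℝ} (ha : a ∈ Tset m) : 0 ≤ a ∧ a ≤ 1 := by
  obtain ⟨i, rfl⟩ := ha
  have h1 : (1 : ℝ) ≤ (m : ℝ) - 1 := by
    have : (2 : ℝ) ≤ (m : ℝ) := by exact_mod_cast hm
    linarith
  have hi : (i : ℝ) ≤ (m : ℝ) - 1 := by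
    have := i.isLt
    have : (i : ℝ) ≤ (m : ℝ) - 1 := by
      have h := Nat.lt_iff_add_one_le.mp i.isLt
      have : ((i : ℕ) : ℝ) + 1 ≤ (m : ℝ) := by exact_mod_cast h
      linarith
    exact this
  constructor
  · positivity
  · rw [div_le_one (by linarith)]; exact hi

lemma limp_bounds {a b : ℝ} (ha : a ≤ 1) (hb : 0 ≤ b) : 0 ≤ limp a b ∧ limp a b ≤ 1 := by
  unfold limp
  constructor
  · exact le_min (by norm_num) (by linarith)
  · exact min_le_left _ _

lemma val_bounds {m : ℕ} (hm : 2 ≤ m) {W : Type} (M : Model m W) (χ : Formula) (x : W) :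
    0 ≤ M.val χ x ∧ M.val χ x ≤ 1 := by
  induction χ generalizing x with
  | var p => exact tset_bounds hm (M.v_mem p x)
  | neg φ ih =>
    obtain ⟨h0, h1⟩ := ih x
    simp only [Model.val, lneg]
    constructor <;> linarith
  | imp φ ψ ihφ ihψ =>
    obtain ⟨h0, h1⟩ := ihφ x
    obtain ⟨g0, g1⟩ := ihψ x
    simp only [Model.val]
    exact limp_bounds h1 g0
  | cond φ ψ ihφ ihψ =>
    simp only [Model.val]
    set F := fun y : W =>
      limp (M.R (fun i => {z : W | M.val φ z = tv m i}) x y) (M.val ψ y) with hF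
    have hFb : ∀ y, 0 ≤ F y ∧ F y ≤ 1 := by
      intro y
      exact limp_bounds (tset_bounds hm (M.R_mem _ x y)).2 (ihψ y).1
    have hne : (Set.range F).Nonempty := Set.range_nonempty_iff_nonempty.mpr M.ne
    have hbdd : BddBelow (Set.range F) :=
      ⟨0, by rintro _ ⟨y, rfl⟩; exact (hFb y).1⟩
    constructor
    · exact le_csInf hne (by rintro _ ⟨y, rfl⟩; exact (hFb y).1)
    · obtain ⟨y⟩ := M.ne
      exact le_trans (csInf_le hbdd ⟨y, rfl⟩) (hFb y).2

lemma and_val {m : ℕ} (hm : 2 ≤ m) {W : Type} (M : Model m W) (ψ θ : Formula) (x : W) :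
    M.val (ψ.and θ) x = min (M.val ψ x) (M.val θ x) := by
  obtain ⟨h0, h1⟩ := val_bounds hm M ψ x
  obtain ⟨g0, g1⟩ := val_bounds hm M θ x
  show lneg (limp (limp (lneg (M.val ψ x)) (lneg (M.val θ x))) (lneg (M.val θ x)))
      = min (M.val ψ x) (M.val θ x)
  set p := M.val ψ x
  set q := M.val θ x
  unfold lneg limp
  rcases le_total p q with h | h
  · rw [min_eq_left h]
    rw [min_eq_right (show (1:ℝ) - (1 - p) + (1 - q) ≤ 1 by linarith)]
    rw [min_eq_right (show 1 - ((1:ℝ) - (1 - p) + (1 - q)) + (1 - q) ≤ 1 by linarith)]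
    ring
  · rw [min_eq_right h]
    rw [min_eq_left (show (1:ℝ) ≤ 1 - (1 - p) + (1 - q) by linarith)]
    rw [min_eq_right (show (1:ℝ) - 1 + (1 - q) ≤ 1 by linarith)]
    ring

lemma limp_min (r a b : ℝ) : limp r (min a b) = min (limp r a) (limp r b) := by
  unfold limp
  rcases le_total a b with h | h
  · rw [min_eq_left h, eq_comm, min_eq_left (min_le_min le_rfl (by linarith : 1 - r + a ≤ 1 - r + b))]
  · rw [min_eq_right h, eq_comm, min_eq_right (min_le_min le_rfl (by linarith : 1 - r + b ≤ 1 - r + a))]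

lemma limp_self (a : ℝ) : limp a a = 1 := by
  unfold limp
  rw [min_eq_left (by linarith)]

/-- validity of A1 and A2: v_x(φ ≻ (ψ ∧ θ)) = min(v_x(φ ≻ ψ), v_x(φ ≻ θ)),
and both implications A1 and A2 take value 1 at every world of every model. -/
theorem a1_a2_valid (m : ℕ) (hm : 2 ≤ m)
    (W : Type) (M : Model m W) (x : W) (φ ψ θ : Formula) :
    M.val (.cond φ (ψ.and θ)) x
        = min (M.val (.cond φ ψ) x) (M.val (.cond φ θ) x) ∧
    M.val (.imp (.cond φ (ψ.and θ)) ((Formula.cond φ ψ).and (.cond φ θ))) x = 1 ∧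
    M.val (.imp ((Formula.cond φ ψ).and (.cond φ θ)) (.cond φ (ψ.and θ))) x = 1 := by
  set R := fun y : W => M.R (fun i => {z : W | M.val φ z = tv m i}) x y with hR
  have key : M.val (.cond φ (ψ.and θ)) x
      = min (M.val (.cond φ ψ) x) (M.val (.cond φ θ) x) := by
    show sInf (Set.range fun y => limp (R y) (M.val (ψ.and θ) y))
        = min (sInf (Set.range fun y => limp (R y) (M.val ψ y)))
              (sInf (Set.range fun y => limp (R y) (M.val θ y)))
    set F := fun y : W => limp (R y) (M.val ψ y)
    set G := fun y : W => limp (R y) (M.val θ y)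
    have hFG : (fun y => limp (R y) (M.val (ψ.and θ) y)) = fun y => min (F y) (G y) := by
      funext y
      rw [and_val hm M ψ θ y, limp_min]
    rw [hFG]
    have hFb : ∀ y, 0 ≤ F y :=
      fun y => (limp_bounds (tset_bounds hm (M.R_mem _ x y)).2 (val_bounds hm M ψ y).1).1
    have hGb : ∀ y, 0 ≤ G y :=
      fun y => (limp_bounds (tset_bounds hm (M.R_mem _ x y)).2 (val_bounds hm M θ y).1).1
    have hneF : (Set.range F).Nonempty := Set.range_nonempty_iff_nonempty.mpr M.ne
    have hneG : (Set.range G).Nonempty := Set.range_nonempty_iff_nonempty.mpr M.ne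
    have hneM : (Set.range fun y => min (F y) (G y)).Nonempty :=
      Set.range_nonempty_iff_nonempty.mpr M.ne
    have hbF : BddBelow (Set.range F) := ⟨0, by rintro _ ⟨y, rfl⟩; exact hFb y⟩
    have hbG : BddBelow (Set.range G) := ⟨0, by rintro _ ⟨y, rfl⟩; exact hGb y⟩
    have hbM : BddBelow (Set.range fun y => min (F y) (G y)) :=
      ⟨0, by rintro _ ⟨y, rfl⟩; exact le_min (hFb y) (hGb y)⟩
    apply le_antisymm
    · apply le_min
      · apply le_csInf hneF
        rintro _ ⟨y, rfl⟩
        exact le_trans (csInf_le hbM ⟨y, rfl⟩) (min_le_left _ _)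
      · apply le_csInf hneG
        rintro _ ⟨y, rfl⟩
        exact le_trans (csInf_le hbM ⟨y, rfl⟩) (min_le_right _ _)
    · apply le_csInf hneM
      rintro _ ⟨y, rfl⟩
      exact min_le_min (csInf_le hbF ⟨y, rfl⟩) (csInf_le hbG ⟨y, rfl⟩)
  refine ⟨key, ?_, ?_⟩
  · show limp (M.val (.cond φ (ψ.and θ)) x)
        (M.val ((Formula.cond φ ψ).and (.cond φ θ)) x) = 1
    rw [and_val hm M _ _ x, key, limp_self]
  · show limp (M.val ((Formula.cond φ ψ).and (.cond φ θ)) x)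
        (M.val (.cond φ (ψ.and θ)) x) = 1
    rw [and_val hm M _ _ x, key, limp_self]

end LCR
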